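/- Let A be a finite nonempty set, w : A → ℝ weights with w(a) ≥ 0 for all a and Σ_a w(a) = 1, f, g : A → ℝ, and τ ∈ (0,1). If m_f is the τ-expectile of f under w and m_g is the τ-expectile of g under w, then |m_f − m_g| ≤ max_{a ∈ A} |f(a) − g(a)|; that is, the τ-expectile operator is nonexpansive in the supremum norm on values. -/
import Mathlib


open Finset

/-- `m` is the `τ`-expectile of the values `f` under the weights `w`. -/
def IsExpectile {A : Type*} [Fintype A] (τ : ℝ) (w f : A → ℝ) (m : ℝ) : Prop :=
  τ * ∑ a, w a * max (f a - m) 0 = (1 - τ) * ∑ a, w a * max (m - f a) 0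

private lemma expectile_mono_bound {A : Type*} [Fintype A]
    (w : A → ℝ) (hw : ∀ a, 0 ≤ w a) (hsum : ∑ a, w a = 1)
    (f g : A → ℝ) (τ : ℝ) (hτ0 : 0 < τ) (hτ1 : τ < 1)
    (mf mg D : ℝ) (hD : ∀ a, g a ≤ f a + D)
    (hmf : IsExpectile τ w f mf) (hmg : IsExpectile τ w g mg) :
    mg ≤ mf + D := by
  by_contra hcon
  push_neg at hcon
  set m' := mf + D with hm'
  -- Step 1 : E_g(m') ≤ 0
  have star : τ * ∑ a, w a * max (g a - m') 0 ≤ (1 - τ) * ∑ a, w a * max (m' - g a) 0 := by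
    have h1 : ∑ a, w a * max (g a - m') 0 ≤ ∑ a, w a * max (f a - mf) 0 := by
      apply Finset.sum_le_sum
      intro a _
      apply mul_le_mul_of_nonneg_left _ (hw a)
      apply max_le_max _ le_rfl
      have := hD a; simp only [hm']; linarith
    have h2 : ∑ a, w a * max (mf - f a) 0 ≤ ∑ a, w a * max (m' - g a) 0 := by
      apply Finset.sum_le_sum
      intro a _
      apply mul_le_mul_of_nonneg_left _ (hw a)
      apply max_le_max _ le_rfl
      have := hD a; simp only [hm']; linarith
    have := hmf
    unfold IsExpectile at this
    calc τ * ∑ a, w a * max (g a - m') 0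
        ≤ τ * ∑ a, w a * max (f a - mf) 0 := by
          exact mul_le_mul_of_nonneg_left h1 hτ0.le
      _ = (1 - τ) * ∑ a, w a * max (mf - f a) 0 := this
      _ ≤ (1 - τ) * ∑ a, w a * max (m' - g a) 0 := by
          exact mul_le_mul_of_nonneg_left h2 (by linarith)
  -- Step 2 : strict decrease of E_g
  set c := min τ (1 - τ) with hc
  have hcpos : 0 < c := lt_min hτ0 (by linarith)
  have key : ∀ x : ℝ, c * (mg - m') ≤
      (τ * max (x - m') 0 - (1 - τ) * max (m' - x) 0)
        - (τ * max (x - mg) 0 - (1 - τ) * max (mg - x) 0) := by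
    intro x
    set p := max (x - m') 0 - max (x - mg) 0 with hp'
    set q := max (mg - x) 0 - max (m' - x) 0 with hq'
    have hp : 0 ≤ p := sub_nonneg.2 (max_le_max (by linarith) le_rfl)
    have hq : 0 ≤ q := sub_nonneg.2 (max_le_max (by linarith) le_rfl)
    have e1 : max (x - m') 0 - max (m' - x) 0 = x - m' := by
      rcases le_total x m' with h | h
      · rw [max_eq_right (by linarith), max_eq_left (by linarith)]; ring
      · rw [max_eq_left (by linarith), max_eq_right (by linarith)]; ring
    have e2 : max (x - mg) 0 - max (mg - x) 0 = x - mg := by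
      rcases le_total x mg with h | h
      · rw [max_eq_right (by linarith), max_eq_left (by linarith)]; ring
      · rw [max_eq_left (by linarith), max_eq_right (by linarith)]; ring
    have hpq : p + q = mg - m' := by simp only [hp', hq']; linarith
    have h1 : c * p ≤ τ * p := mul_le_mul_of_nonneg_right (min_le_left _ _) hp
    have h2 : c * q ≤ (1 - τ) * q := mul_le_mul_of_nonneg_right (min_le_right _ _) hq
    have : c * (mg - m') = c * p + c * q := by rw [← hpq]; ring
    rw [this]
    have expand : (τ * max (x - m') 0 - (1 - τ) * max (m' - x) 0)
        - (τ * max (x - mg) 0 - (1 - τ) * max (mg - x) 0) = τ * p + (1 - τ) * q := by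
      simp only [hp', hq']; ring
    rw [expand]
    linarith
  have sumkey : c * (mg - m') ≤
      (τ * ∑ a, w a * max (g a - m') 0 - (1 - τ) * ∑ a, w a * max (m' - g a) 0)
        - (τ * ∑ a, w a * max (g a - mg) 0 - (1 - τ) * ∑ a, w a * max (mg - g a) 0) := by
    have h : ∑ a, w a * (c * (mg - m')) ≤
        ∑ a, w a * ((τ * max (g a - m') 0 - (1 - τ) * max (m' - g a) 0)
          - (τ * max (g a - mg) 0 - (1 - τ) * max (mg - g a) 0)) := by
      apply Finset.sum_le_sum
      intro a _
      exact mul_le_mul_of_nonneg_left (key (g a)) (hw a)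
    have hl : ∑ a, w a * (c * (mg - m')) = c * (mg - m') := by
      rw [← Finset.sum_mul, hsum, one_mul]
    rw [hl] at h
    refine h.trans_eq ?_
    have step : ∑ a, w a * ((τ * max (g a - m') 0 - (1 - τ) * max (m' - g a) 0)
          - (τ * max (g a - mg) 0 - (1 - τ) * max (mg - g a) 0))
        = ∑ a, (τ * (w a * max (g a - m') 0) - (1 - τ) * (w a * max (m' - g a) 0)
          - (τ * (w a * max (g a - mg) 0) - (1 - τ) * (w a * max (mg - g a) 0))) :=
      Finset.sum_congr rfl (fun a _ => by ring)
    rw [step]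
    simp only [Finset.sum_sub_distrib, ← Finset.mul_sum]
  have hEg : τ * ∑ a, w a * max (g a - mg) 0 - (1 - τ) * ∑ a, w a * max (mg - g a) 0 = 0 := by
    have := hmg; unfold IsExpectile at this; linarith
  rw [hEg] at sumkey
  have : 0 < c * (mg - m') := mul_pos hcpos (by linarith)
  linarith

/-- The `τ`-expectile operator is nonexpansive in the supremum norm on
values: `|m_f − m_g| ≤ max_a |f a − g a|`. -/
theorem finite_expectile_nonexpansive
    {A : Type*} [Fintype A] [Nonempty A]
    (w : A → ℝ) (hw : ∀ a, 0 ≤ w a) (hsum : ∑ a, w a = 1)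
    (f g : A → ℝ) (τ : ℝ) (hτ : τ ∈ Set.Ioo (0 : ℝ) 1)
    (mf mg : ℝ) (hmf : IsExpectile τ w f mf) (hmg : IsExpectile τ w g mg) :
    |mf - mg| ≤ ⨆ a, |f a - g a| := by
  obtain ⟨hτ0, hτ1⟩ := hτ
  set D := ⨆ a, |f a - g a| with hD
  have hbdd : BddAbove (Set.range fun a => |f a - g a|) :=
    Set.Finite.bddAbove (Set.finite_range _)
  have hDa : ∀ a, |f a - g a| ≤ D := fun a => le_ciSup hbdd a
  have h1 : mg ≤ mf + D := by
    apply expectile_mono_bound w hw hsum f g τ hτ0 hτ1 mf mg D _ hmf hmg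
    intro a
    have := hDa a
    have := abs_le.mp this
    linarith [this.1]
  have h2 : mf ≤ mg + D := by
    apply expectile_mono_bound w hw hsum g f τ hτ0 hτ1 mg mf D _ hmg hmf
    intro a
    have := hDa a
    have := abs_le.mp this
    linarith [this.2]
  rw [abs_sub_le_iff]
  constructor <;> linarith
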